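/- (Straightening law.) Fix g ∈ {B_m, C_m, D_m}. For every α ∈ ℤ^m: either there exist σ ∈ S_m and a partition λ of length m with σ∘α = λ, in which case u_α^g = (−1)^{l(σ)} u_λ^g; or no such σ and λ exist, in which case u_α^g = 0. In particular u^g_{σ∘α} = (−1)^{l(σ)} u^g_α for all σ ∈ S_m. The same holds for the determinants v_β^g, β ∈ ℤ^n, with S_n and partitions of length n in place of S_m. -/

import Mathlib

open scoped BigOperators

noncomputable section

/-- Integral weights of rank `m`, identified with `ℤ^m`. -/
abbrev Wt (m : ℕ) := Fin m → ℤ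

/-- Rational weights of rank `m` (needed for the half-integral `ρ` of type `B`). -/
abbrev QWt (m : ℕ) := Fin m → ℚ

/-- Coercion of an integral weight to a rational weight. -/
def castWt {m : ℕ} (β : Wt m) : QWt m := fun i => (β i : ℚ)

/-- The standard basis vector `ε_i` of `ℤ^m`. -/
def eps {m : ℕ} (i : Fin m) : Wt m := fun j => if j = i then 1 else 0

/-- `ρ_m = (m, m-1, ..., 1)`. -/
def rhoZ (m : ℕ) : Wt m := fun i => (m : ℤ) - (i : ℕ)

/-- `κ_m = (1, ..., 1)`. -/
def kappa (m : ℕ) : Wt m := fun _ => 1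

/-- A partition of length `m`: a weakly decreasing element of `ℕ^m` (written in `ℤ^m`). -/
def IsPart {m : ℕ} (lam : Wt m) : Prop := Antitone lam ∧ ∀ i, 0 ≤ lam i

/-- `|λ| = λ_1 + ⋯ + λ_m`. -/
def wtSum {m : ℕ} (lam : Wt m) : ℤ := ∑ i, lam i

/-- The conjugate partition, regarded as a partition of length `n`:
`λ'_j = #{i : λ_i ≥ j}` (with `j` one-based). -/
def conj {m : ℕ} (n : ℕ) (lam : Wt m) : Wt n :=
  fun j => ((Finset.univ.filter (fun i : Fin m => ((j : ℕ) : ℤ) < lam i)).card : ℤ)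

/-- The permutation action of `S_m` on `ℤ^m`. -/
def pact {m : ℕ} (σ : Equiv.Perm (Fin m)) (β : Wt m) : Wt m := β ∘ σ.symm

/-- The permutation action of `S_m` on `ℚ^m`. -/
def qpact {m : ℕ} (σ : Equiv.Perm (Fin m)) (β : QWt m) : QWt m := β ∘ σ.symm

/-- The dot action `σ ∘ α = σ(α + ρ_m) - ρ_m`. -/
def dotAct {m : ℕ} (σ : Equiv.Perm (Fin m)) (α : Wt m) : Wt m :=
  pact σ (α + rhoZ m) - rhoZ m

/-- The three root-system types considered in the paper. -/
inductive RT | B | C | D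
deriving DecidableEq

/-- The action of a signed permutation `(σ, ε)` on `ℚ^m`: the hyperoctahedral group
`W_{B_m} = W_{C_m}` consists of all such pairs. -/
def sact {m : ℕ} (σ : Equiv.Perm (Fin m)) (ε : Fin m → Bool) (β : QWt m) : QWt m :=
  fun i => (if ε i then -1 else 1) * β (σ.symm i)

/-- `(-1)^{l(w)}` for a signed permutation `w = (σ, ε)`: the sign character of the
hyperoctahedral group, which takes value `-1` on each Coxeter generator. -/
def ssign {m : ℕ} (σ : Equiv.Perm (Fin m)) (ε : Fin m → Bool) : ℤ :=
  (Equiv.Perm.sign σ : ℤ) * ∏ i, (if ε i then -1 else 1)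

/-- Which signed permutations belong to the Weyl group of type `g`: for `B` and `C` all of
them, for `D` only those changing an even number of signs. -/
def allowed (g : RT) {m : ℕ} (ε : Fin m → Bool) : Prop :=
  g = RT.D → (∏ i, (if ε i then (-1 : ℤ) else 1)) = 1

instance (g : RT) {m : ℕ} : DecidablePred (allowed g (m := m)) := by
  unfold allowed; infer_instance

/-- The Laurent polynomial ring `ℤ[x_1^{±1/2}, ..., x_m^{±1/2}]` (allowing all rational
exponents), realized as the group algebra of `ℚ^m`. -/
abbrev LQ (m : ℕ) := AddMonoidAlgebra ℤ (QWt m)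

/-- The monomial `x^β`. -/
def XQ {m : ℕ} (β : QWt m) : LQ m := AddMonoidAlgebra.single β 1

instance {m : ℕ} : IsDomain (LQ m) := NoZeroDivisors.to_isDomain _

/-- The fraction field of the Laurent polynomial ring, in which Schur functions live. -/
abbrev KK (m : ℕ) := FractionRing (LQ m)

def toK {m : ℕ} (p : LQ m) : KK m := algebraMap (LQ m) (KK m) p

/-- The half-sum of positive roots: `ρ_B = ρ_m - (1/2,…,1/2)`, `ρ_C = ρ_m`,
`ρ_D = ρ_m - (1,…,1)`. -/
def rhoG (g : RT) (m : ℕ) : QWt m :=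
  match g with
  | RT.B => fun i => ((m : ℚ) - (i : ℕ)) - 1/2
  | RT.C => fun i => (m : ℚ) - (i : ℕ)
  | RT.D => fun i => ((m : ℚ) - (i : ℕ)) - 1

/-- `a_β = Σ_{w ∈ W_g} (-1)^{l(w)} x^{w(β)}`. -/
def aalt (g : RT) {m : ℕ} (β : QWt m) : LQ m :=
  ∑ σ : Equiv.Perm (Fin m), ∑ ε ∈ Finset.univ.filter (allowed g),
    ssign σ ε • XQ (sact σ ε β)

/-- The Schur function `s_ν^g = a_{ν+ρ_g} / a_{ρ_g}`. -/
def SchurF (g : RT) {m : ℕ} (ν : QWt m) : KK m :=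
  toK (aalt g (ν + rhoG g m)) / toK (aalt g (rhoG g m))

/-- The one-row weight `(k, 0, …, 0)`. -/
def rowWt (m : ℕ) (k : ℤ) : QWt m := fun i => if (i : ℕ) = 0 then (k : ℚ) else 0

/-- The one-column weight `(1^p, 0^{m-p})`. -/
def colWt (m : ℕ) (p : ℤ) : QWt m := fun i => if ((i : ℕ) : ℤ) < p then 1 else 0

/-- `h_k^g = s_{(k,0,…,0)}^g` for `k ≥ 0`, and `0` for `k < 0`. -/
def hF (g : RT) (m : ℕ) (k : ℤ) : KK m := if 0 ≤ k then SchurF g (rowWt m k) else 0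

/-- `H_k^g = h_k^g + h_{k-2}^g + ⋯ + h_{k mod 2}^g` for `k ≥ 0`, and `0` for `k < 0`. -/
def HF (g : RT) (m : ℕ) (k : ℤ) : KK m :=
  if 0 ≤ k then ∑ j ∈ Finset.range (k.toNat / 2 + 1), hF g m (k - 2 * j) else 0

/-- `e_p^g = s^g_{(1^p,0^{m-p})}` for `0 ≤ p ≤ m`, `e_p^g = e^g_{2m-p}` for `m < p ≤ 2m`,
and `0` otherwise. -/
def eF (g : RT) (m : ℕ) (p : ℤ) : KK m :=
  if 0 ≤ p ∧ p ≤ (m : ℤ) then SchurF g (colWt m p)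
  else if (m : ℤ) < p ∧ p ≤ 2 * m then SchurF g (colWt m (2 * m - p))
  else 0

/-- `E_k^g = e_k^g + e_{k-2}^g + ⋯ + e_{k mod 2}^g` for `k ≥ 0`, and `0` for `k < 0`. -/
def EF (g : RT) (m : ℕ) (k : ℤ) : KK m :=
  if 0 ≤ k then ∑ j ∈ Finset.range (k.toNat / 2 + 1), eF g m (k - 2 * j) else 0

/-- The `m × m` determinant `u_α^g` (in the one-row characters `h^g`). -/
def uDet (g : RT) {m : ℕ} (α : Wt m) : KK m :=
  Matrix.det (Matrix.of fun i j : Fin m =>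
    if (j : ℕ) = 0 then hF g m (α i - (i : ℕ))
    else hF g m (α i - (i : ℕ) + (j : ℕ)) + hF g m (α i - (i : ℕ) - (j : ℕ)))

/-- The `n × n` determinant `v_β^g` (in the one-column characters `e^g` of rank `m`). -/
def vDet (g : RT) (m : ℕ) {n : ℕ} (β : Wt n) : KK m :=
  Matrix.det (Matrix.of fun i j : Fin n =>
    if (j : ℕ) = 0 then eF g m (β i - (i : ℕ))
    else eF g m (β i - (i : ℕ) + (j : ℕ)) + eF g m (β i - (i : ℕ) - (j : ℕ)))

/-- `h_α^g = h^g_{α_1} ⋯ h^g_{α_m}` (and similarly for arbitrary index length). -/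
def hProd (g : RT) (m : ℕ) {n : ℕ} (α : Wt n) : KK m := ∏ i, hF g m (α i)

def HProd (g : RT) (m : ℕ) {n : ℕ} (α : Wt n) : KK m := ∏ i, HF g m (α i)

def eProd (g : RT) (m : ℕ) {n : ℕ} (α : Wt n) : KK m := ∏ i, eF g m (α i)

def EProd (g : RT) (m : ℕ) {n : ℕ} (α : Wt n) : KK m := ∏ i, EF g m (α i)

/-- The Laurent polynomial ring `ℤ[x_1^{±1}, ..., x_m^{±1}]`, realized as the group
algebra of `ℤ^m`. -/
abbrev LZ (m : ℕ) := AddMonoidAlgebra ℤ (Wt m)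

/-- The monomial `x^β`. -/
def XZ {m : ℕ} (β : Wt m) : LZ m := AddMonoidAlgebra.single β 1

/-- `φ_m = ∏_{1≤i<j≤m} (1 - x_i/x_j) · ∏_{1≤r<s≤m} (1 - 1/(x_r x_s))`; its coefficients
are the function `a` (resp. `f_{q=1}` up to expansion conventions). -/
def phiSmall (m : ℕ) : LZ m :=
  (∏ p ∈ Finset.univ.filter (fun p : Fin m × Fin m => p.1 < p.2),
      (1 - XZ (eps p.1 - eps p.2))) *
  (∏ p ∈ Finset.univ.filter (fun p : Fin m × Fin m => p.1 < p.2),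
      (1 - XZ (-(eps p.1 + eps p.2))))

/-- `Φ_m = ∏_{1≤i<j≤m} (1 - x_i/x_j) · ∏_{1≤r≤s≤m} (1 - 1/(x_r x_s))`. -/
def phiBig (m : ℕ) : LZ m :=
  (∏ p ∈ Finset.univ.filter (fun p : Fin m × Fin m => p.1 < p.2),
      (1 - XZ (eps p.1 - eps p.2))) *
  (∏ p ∈ Finset.univ.filter (fun p : Fin m × Fin m => p.1 ≤ p.2),
      (1 - XZ (-(eps p.1 + eps p.2))))

/-- The coefficient `a(γ)` of `x^γ` in `φ_m`. -/
def coeffSmall (m : ℕ) (γ : Wt m) : ℤ := (phiSmall m).coeff γ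

/-- The coefficient `A(γ)` of `x^γ` in `Φ_m`. -/
def coeffBig (m : ℕ) (γ : Wt m) : ℤ := (phiBig m).coeff γ

/-- The generic `q`-partition function attached to a finite family `v` of vectors:
the coefficient of `q^d` counts the families `(n_i)` of nonnegative integers with
`Σ n_i = d` and `Σ n_i v_i = β`.  This encodes the coefficient of `x^β` in the formal
series expansion of `∏_i (1 - q x^{v_i})^{-1}` as a power series in `q`. -/
def PqPS {m : ℕ} {ι : Type} [Fintype ι] (v : ι → Wt m) (β : QWt m) : PowerSeries ℤ :=
  PowerSeries.mk fun d =>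
    (Nat.card {n : ι → ℕ // (∑ i, n i) = d ∧ castWt (∑ i, (n i : ℤ) • v i) = β} : ℤ)

/-- The specialization at `q = 1` of `PqPS`: the number of ways to write `β` as a
nonnegative integral combination of the vectors `v_i`. -/
def POne {m : ℕ} {ι : Type} [Fintype ι] (v : ι → Wt m) (β : Wt m) : ℤ :=
  (Nat.card {n : ι → ℕ // (∑ i, (n i : ℤ) • v i) = β} : ℤ)

/-- Index type for the pairs `1 ≤ i < j ≤ m`. -/
abbrev IdxLT (m : ℕ) := {p : Fin m × Fin m // p.1 < p.2}

/-- Index type for the pairs `1 ≤ i ≤ j ≤ m`. -/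
abbrev IdxLE (m : ℕ) := {p : Fin m × Fin m // p.1 ≤ p.2}

/-- The positive roots `ε_i - ε_j` (`i < j`) of type `A_m`. -/
def rootsA (m : ℕ) : IdxLT m → Wt m := fun p => eps p.1.1 - eps p.1.2

/-- The positive roots of type `B_m`. -/
def rootsB (m : ℕ) : IdxLT m ⊕ IdxLT m ⊕ Fin m → Wt m
  | .inl p => eps p.1.1 - eps p.1.2
  | .inr (.inl p) => eps p.1.1 + eps p.1.2
  | .inr (.inr i) => eps i

/-- The positive roots of type `C_m` (note `2ε_i = ε_i + ε_i`). -/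
def rootsC (m : ℕ) : IdxLT m ⊕ IdxLE m → Wt m
  | .inl p => eps p.1.1 - eps p.1.2
  | .inr p => eps p.1.1 + eps p.1.2

/-- The positive roots of type `D_m`. -/
def rootsD (m : ℕ) : IdxLT m ⊕ IdxLT m → Wt m
  | .inl p => eps p.1.1 - eps p.1.2
  | .inr p => eps p.1.1 + eps p.1.2

/-- The vectors `ε_i - ε_j` (`i < j`) and `-(ε_r + ε_s)` (`r < s`), whose `q`-partition
function is `f_q`. -/
def vfSmall (m : ℕ) : IdxLT m ⊕ IdxLT m → Wt m
  | .inl p => eps p.1.1 - eps p.1.2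
  | .inr p => -(eps p.1.1 + eps p.1.2)

/-- The vectors `ε_i - ε_j` (`i < j`) and `-(ε_r + ε_s)` (`r ≤ s`), whose `q`-partition
function is `F_q`. -/
def vfBig (m : ℕ) : IdxLT m ⊕ IdxLE m → Wt m
  | .inl p => eps p.1.1 - eps p.1.2
  | .inr p => -(eps p.1.1 + eps p.1.2)

/-- `f_q`. -/
def fq {m : ℕ} (β : Wt m) : PowerSeries ℤ := PqPS (vfSmall m) (castWt β)

/-- `F_q`. -/
def Fq {m : ℕ} (β : Wt m) : PowerSeries ℤ := PqPS (vfBig m) (castWt β)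

/-- The `q`-analogue of Kostant's partition function, type `A_m`. -/
def PqA {m : ℕ} (β : QWt m) : PowerSeries ℤ := PqPS (rootsA m) β

/-- The `q`-analogue of Kostant's partition function, types `B_m`, `C_m`, `D_m`. -/
def PqG (g : RT) {m : ℕ} (β : QWt m) : PowerSeries ℤ :=
  match g with
  | RT.B => PqPS (rootsB m) β
  | RT.C => PqPS (rootsC m) β
  | RT.D => PqPS (rootsD m) β

/-- The Kostka–Foulkes polynomial
`K^g_{λ,μ}(q) = Σ_{w ∈ W_g} (-1)^{l(w)} P_q^g(w(λ+ρ_g) - (μ+ρ_g))`. -/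
def KF (g : RT) {m : ℕ} (lam mu : QWt m) : PowerSeries ℤ :=
  ∑ σ : Equiv.Perm (Fin m), ∑ ε ∈ Finset.univ.filter (allowed g),
    ssign σ ε • PqG g (sact σ ε (lam + rhoG g m) - (mu + rhoG g m))

/-- The Kostka–Foulkes polynomial of type `A_m`,
`K^{A_m}_{λ,γ}(q) = Σ_{σ ∈ S_m} (-1)^{l(σ)} P_q^{A_m}(σ(λ+ρ_m) - (γ+ρ_m))`,
defined for arbitrary `γ ∈ ℤ^m`. -/
def KFA {m : ℕ} (lam gamma : Wt m) : PowerSeries ℤ :=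
  ∑ σ : Equiv.Perm (Fin m),
    (Equiv.Perm.sign σ : ℤ) • PqA (castWt (pact σ (lam + rhoZ m) - (gamma + rhoZ m)))

/-- `u_{λ,μ}(q) = Σ_{σ ∈ S_m} (-1)^{l(σ)} f_q(σ(λ+ρ_m) - μ - ρ_m)`. -/
def uP {m : ℕ} (lam mu : Wt m) : PowerSeries ℤ :=
  ∑ σ : Equiv.Perm (Fin m),
    (Equiv.Perm.sign σ : ℤ) • fq (pact σ (lam + rhoZ m) - mu - rhoZ m)

/-- `U_{λ,μ}(q) = Σ_{σ ∈ S_m} (-1)^{l(σ)} F_q(σ(λ+ρ_m) - μ - ρ_m)`. -/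
def UP {m : ℕ} (lam mu : Wt m) : PowerSeries ℤ :=
  ∑ σ : Equiv.Perm (Fin m),
    (Equiv.Perm.sign σ : ℤ) • Fq (pact σ (lam + rhoZ m) - mu - rhoZ m)

/-- `f_q` specialized at `q = 1`. -/
def fOne {m : ℕ} (β : Wt m) : ℤ := POne (vfSmall m) β

/-- `F_q` specialized at `q = 1`. -/
def FOne {m : ℕ} (β : Wt m) : ℤ := POne (vfBig m) β

/-- `u_{λ,μ}(1)`. -/
def uP1 {m : ℕ} (lam mu : Wt m) : ℤ :=
  ∑ σ : Equiv.Perm (Fin m),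
    (Equiv.Perm.sign σ : ℤ) * fOne (pact σ (lam + rhoZ m) - mu - rhoZ m)

/-- `U_{λ,μ}(1)`. -/
def UP1 {m : ℕ} (lam mu : Wt m) : ℤ :=
  ∑ σ : Equiv.Perm (Fin m),
    (Equiv.Perm.sign σ : ℤ) * FOne (pact σ (lam + rhoZ m) - mu - rhoZ m)

/-- `λ̂ = (n - λ_m, …, n - λ_1)`. -/
def hatP {m : ℕ} (n : ℤ) (lam : Wt m) : Wt m := fun i => n - lam i.rev

/-- The involution `I(α_1, …, α_m) = (-α_m, …, -α_1)`. -/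
def invI {m : ℕ} (α : Wt m) : Wt m := fun i => -α i.rev

/-- `σ*`, defined by `σ*(k) = σ(m - k + 1)`. -/
def starPerm {m : ℕ} (σ : Equiv.Perm (Fin m)) : Equiv.Perm (Fin m) :=
  (Fin.revPerm).trans σ

/-- The number of ways to write `β = Σ_{1≤r≤s≤m} e_{r,s} (ε_r + ε_s)`, `e_{r,s} ∈ ℕ`. -/
def cC (m : ℕ) (β : Wt m) : ℕ :=
  Nat.card {e : IdxLE m → ℕ // (∑ p, (e p : ℤ) • (eps p.1.1 + eps p.1.2)) = β}

/-- The number of ways to write `β = Σ_{1≤r<s≤m} e_{r,s} (ε_r + ε_s)`, `e_{r,s} ∈ ℕ`. -/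
def cD (m : ℕ) (β : Wt m) : ℕ :=
  Nat.card {e : IdxLT m → ℕ // (∑ p, (e p : ℤ) • (eps p.1.1 + eps p.1.2)) = β}

/-- The set `C_k^m`. -/
def setC (m k : ℕ) : Set (Wt m) :=
  {β | (∃ e : IdxLE m → ℕ, (∑ p, (e p : ℤ) • (eps p.1.1 + eps p.1.2)) = β) ∧
       wtSum β = 2 * k}

/-- The set `D_k^m`. -/
def setD (m k : ℕ) : Set (Wt m) :=
  {β | (∃ e : IdxLT m → ℕ, (∑ p, (e p : ℤ) • (eps p.1.1 + eps p.1.2)) = β) ∧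
       wtSum β = 2 * k}

/-!
Row `i` of the matrices defining `u_α` and `v_β` depends only on `α_i - i`, and the dot action
of `σ` permutes the numbers `α_i - i` by `σ`; so it permutes the rows and multiplies the
determinant by `sign σ`. If two of the `α_i - i` coincide, two rows are equal. Otherwise some
`σ ∘ α` is weakly decreasing; if it is not a partition its last entry `λ_m` is negative, and then
every entry of the last row is some `h_k` (or `e_k`) with `k ≤ λ_m < 0`, hence zero.
-/

section Straightening

variable {R : Type*} [CommRing R]

def jacobiTrudiMatrix {n : ℕ} (F : ℤ → R) (α : Wt n) : Matrix (Fin n) (Fin n) R :=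
  Matrix.of fun i j =>
    if (j : ℕ) = 0 then F (α i - (i : ℕ))
    else F (α i - (i : ℕ) + (j : ℕ)) + F (α i - (i : ℕ) - (j : ℕ))

def jacobiTrudiDet {n : ℕ} (F : ℤ → R) (α : Wt n) : R := (jacobiTrudiMatrix F α).det

theorem uDet_eq_jacobiTrudiDet (g : RT) {m : ℕ} (α : Wt m) :
    uDet g α = jacobiTrudiDet (hF g m) α := rfl

theorem vDet_eq_jacobiTrudiDet (g : RT) (m : ℕ) {n : ℕ} (β : Wt n) :
    vDet g m β = jacobiTrudiDet (eF g m) β := rfl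

theorem hF_of_neg (g : RT) (m : ℕ) {k : ℤ} (hk : k < 0) : hF g m k = 0 := by
  rw [hF, if_neg hk.not_ge]

theorem eF_of_neg (g : RT) (m : ℕ) {k : ℤ} (hk : k < 0) : eF g m k = 0 := by
  rw [eF, if_neg (by omega), if_neg (by omega)]

theorem dotAct_apply_sub_val {n : ℕ} (σ : Equiv.Perm (Fin n)) (α : Wt n) (i : Fin n) :
    dotAct σ α i - (i : ℕ) = α (σ.symm i) - (σ.symm i : ℕ) := by
  simp only [dotAct, pact, rhoZ, Pi.sub_apply, Pi.add_apply, Function.comp_apply]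
  ring

theorem jacobiTrudiDet_dotAct {n : ℕ} (F : ℤ → R) (σ : Equiv.Perm (Fin n)) (α : Wt n) :
    jacobiTrudiDet F (dotAct σ α) = (Equiv.Perm.sign σ : ℤ) • jacobiTrudiDet F α := by
  have hrows :
      jacobiTrudiMatrix F (dotAct σ α) = (jacobiTrudiMatrix F α).submatrix σ.symm id := by
    ext i j
    simp only [jacobiTrudiMatrix, Matrix.submatrix_apply, Matrix.of_apply, id_eq,
      dotAct_apply_sub_val]
  rw [jacobiTrudiDet, hrows, Matrix.det_permute, Equiv.Perm.sign_symm, zsmul_eq_mul]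
  rfl

theorem jacobiTrudiDet_eq_sign_smul_of_dotAct_eq {n : ℕ} (F : ℤ → R) {σ : Equiv.Perm (Fin n)}
    {α lam : Wt n} (h : dotAct σ α = lam) :
    jacobiTrudiDet F α = (Equiv.Perm.sign σ : ℤ) • jacobiTrudiDet F lam := by
  rw [← h, jacobiTrudiDet_dotAct, ← Units.smul_def, ← Units.smul_def, smul_smul,
    Int.units_mul_self, one_smul]

theorem jacobiTrudiDet_eq_zero_of_sub_val_eq {n : ℕ} (F : ℤ → R) (α : Wt n) {i i' : Fin n}
    (hne : i ≠ i') (h : α i - (i : ℕ) = α i' - (i' : ℕ)) : jacobiTrudiDet F α = 0 :=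
  Matrix.det_zero_of_row_eq hne <| funext fun j => by
    simp only [jacobiTrudiMatrix, Matrix.of_apply, h]

theorem jacobiTrudiDet_eq_zero_of_neg {n : ℕ} (F : ℤ → R) (hF : ∀ k < 0, F k = 0) (α : Wt n)
    (i : Fin n) (h : α i - (i : ℕ) + (n - 1 : ℤ) < 0) : jacobiTrudiDet F α = 0 := by
  refine Matrix.det_eq_zero_of_row_eq_zero i fun j => ?_
  have hj : ((j : ℕ) : ℤ) ≤ n - 1 := by have := j.is_lt; omega
  simp only [jacobiTrudiMatrix, Matrix.of_apply]
  split
  · exact hF _ (by omega)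
  · rw [hF _ (by omega), hF _ (by omega), add_zero]

theorem antitone_add_val_of_strictAnti {n : ℕ} {f : Fin n → ℤ} (hf : StrictAnti f) :
    Antitone fun i => f i + (i : ℕ) := by
  cases n with
  | zero => exact fun i => i.elim0
  | succ n =>
    refine Fin.antitone_iff_succ_le.mpr fun i => ?_
    have := hf (Fin.castSucc_lt_succ (i := i))
    simp only [Fin.val_succ, Fin.val_castSucc, Nat.cast_add, Nat.cast_one]
    omega

theorem exists_antitone_dotAct {n : ℕ} (α : Wt n)
    (hinj : Function.Injective fun i : Fin n => α i - (i : ℕ)) :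
    ∃ σ : Equiv.Perm (Fin n), Antitone (dotAct σ α) := by
  set d : Fin n → ℤ := fun i => α i - (i : ℕ)
  set τ := Tuple.sort (-d)
  have hτ : StrictAnti (d ∘ τ) := fun a b hab =>
    neg_lt_neg_iff.mp <| (Tuple.monotone_sort (-d)).strictMono_of_injective
      (Function.Injective.comp (fun _ _ h => hinj (neg_injective h)) τ.injective) hab
  have hdot : dotAct τ.symm α = fun i => (d ∘ τ) i + (i : ℕ) := funext fun i => by
    have := dotAct_apply_sub_val τ.symm α i
    rw [Equiv.symm_symm] at this
    simp only [Function.comp_apply, d]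
    omega
  exact ⟨τ.symm, hdot ▸ antitone_add_val_of_strictAnti hτ⟩

theorem jacobiTrudiDet_eq_zero {n : ℕ} (F : ℤ → R) (hF : ∀ k < 0, F k = 0) (α : Wt n)
    (h : ¬ ∃ σ : Equiv.Perm (Fin n), ∃ lam : Wt n, IsPart lam ∧ dotAct σ α = lam) :
    jacobiTrudiDet F α = 0 := by
  by_cases hinj : Function.Injective fun i : Fin n => α i - (i : ℕ)
  swap
  · obtain ⟨i, i', heq, hne⟩ := Function.not_injective_iff.mp hinj
    exact jacobiTrudiDet_eq_zero_of_sub_val_eq F α hne heq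
  obtain ⟨σ, hanti⟩ := exists_antitone_dotAct α hinj
  obtain ⟨i, hi⟩ : ∃ i, dotAct σ α i < 0 := by
    by_contra! hpos
    exact h ⟨σ, _, ⟨hanti, hpos⟩, rfl⟩
  have hn : 0 < n := i.pos
  let last : Fin n := ⟨n - 1, by omega⟩
  have hval : ((last : ℕ) : ℤ) = n - 1 := by simp only [last]; omega
  have hlast : dotAct σ α last < 0 :=
    (hanti (show i ≤ last from Fin.le_def.mpr (by simp only [last]; omega))).trans_lt hi
  have hzero : jacobiTrudiDet F (dotAct σ α) = 0 :=
    jacobiTrudiDet_eq_zero_of_neg F hF _ last (by omega)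
  rw [jacobiTrudiDet_eq_sign_smul_of_dotAct_eq F rfl, hzero, smul_zero]

theorem jacobiTrudiDet_straightening {n : ℕ} (F : ℤ → R) (hF : ∀ k < 0, F k = 0) :
    (∀ α : Wt n, ∀ σ : Equiv.Perm (Fin n), ∀ lam : Wt n, dotAct σ α = lam →
        jacobiTrudiDet F α = (Equiv.Perm.sign σ : ℤ) • jacobiTrudiDet F lam) ∧
    (∀ α : Wt n, (¬ ∃ σ : Equiv.Perm (Fin n), ∃ lam : Wt n, IsPart lam ∧ dotAct σ α = lam) →
        jacobiTrudiDet F α = 0) ∧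
    (∀ α : Wt n, ∀ σ : Equiv.Perm (Fin n),
        jacobiTrudiDet F (dotAct σ α) = (Equiv.Perm.sign σ : ℤ) • jacobiTrudiDet F α) :=
  ⟨fun _ _ _ h => jacobiTrudiDet_eq_sign_smul_of_dotAct_eq F h, jacobiTrudiDet_eq_zero F hF,
    fun α σ => jacobiTrudiDet_dotAct F σ α⟩

end Straightening

theorem stmt3_general (m n : ℕ) (g : RT) :
    (∀ α : Wt m, ∀ σ : Equiv.Perm (Fin m), ∀ lam : Wt m, IsPart lam → dotAct σ α = lam →
        uDet g α = (Equiv.Perm.sign σ : ℤ) • uDet g lam) ∧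
    (∀ α : Wt m, (¬ ∃ σ : Equiv.Perm (Fin m), ∃ lam : Wt m, IsPart lam ∧ dotAct σ α = lam) →
        uDet g α = 0) ∧
    (∀ α : Wt m, ∀ σ : Equiv.Perm (Fin m),
        uDet g (dotAct σ α) = (Equiv.Perm.sign σ : ℤ) • uDet g α) ∧
    (∀ β : Wt n, ∀ σ : Equiv.Perm (Fin n), ∀ nu : Wt n, IsPart nu → dotAct σ β = nu →
        vDet g m β = (Equiv.Perm.sign σ : ℤ) • vDet g m nu) ∧
    (∀ β : Wt n, (¬ ∃ σ : Equiv.Perm (Fin n), ∃ nu : Wt n, IsPart nu ∧ dotAct σ β = nu) →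
        vDet g m β = 0) ∧
    (∀ β : Wt n, ∀ σ : Equiv.Perm (Fin n),
        vDet g m (dotAct σ β) = (Equiv.Perm.sign σ : ℤ) • vDet g m β) := by
  simp only [uDet_eq_jacobiTrudiDet, vDet_eq_jacobiTrudiDet]
  obtain ⟨hu₁, hu₂, hu₃⟩ := jacobiTrudiDet_straightening (n := m) (hF g m) fun _ => hF_of_neg g m
  obtain ⟨hv₁, hv₂, hv₃⟩ := jacobiTrudiDet_straightening (n := n) (eF g m) fun _ => eF_of_neg g m
  exact ⟨fun α σ lam _ => hu₁ α σ lam, hu₂, hu₃, fun β σ nu _ => hv₁ β σ nu, hv₂, hv₃⟩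

/-- Straightening law for the determinants `u_α^g` (`α ∈ ℤ^m`) and
`v_β^g` (`β ∈ ℤ^n`). -/
theorem stmt3 (m n : ℕ) (hm : 1 ≤ m) (g : RT) :
    (∀ α : Wt m, ∀ σ : Equiv.Perm (Fin m), ∀ lam : Wt m, IsPart lam → dotAct σ α = lam →
        uDet g α = (Equiv.Perm.sign σ : ℤ) • uDet g lam) ∧
    (∀ α : Wt m, (¬ ∃ σ : Equiv.Perm (Fin m), ∃ lam : Wt m, IsPart lam ∧ dotAct σ α = lam) →
        uDet g α = 0) ∧
    (∀ α : Wt m, ∀ σ : Equiv.Perm (Fin m),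
        uDet g (dotAct σ α) = (Equiv.Perm.sign σ : ℤ) • uDet g α) ∧
    (∀ β : Wt n, ∀ σ : Equiv.Perm (Fin n), ∀ nu : Wt n, IsPart nu → dotAct σ β = nu →
        vDet g m β = (Equiv.Perm.sign σ : ℤ) • vDet g m nu) ∧
    (∀ β : Wt n, (¬ ∃ σ : Equiv.Perm (Fin n), ∃ nu : Wt n, IsPart nu ∧ dotAct σ β = nu) →
        vDet g m β = 0) ∧
    (∀ β : Wt n, ∀ σ : Equiv.Perm (Fin n),
        vDet g m (dotAct σ β) = (Equiv.Perm.sign σ : ℤ) • vDet g m β) :=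
  stmt3_general m n g

end
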